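/- Suppose w_1, …, w_n are vertices such that for each 1 ≤ i ≤ n−1 there are disjoint sets X_i, Y_{i+1} of size 2k forming a complete bipartite graph in blue between blocks B(w_i) and B(w_{i+1}) of a coloured graph Γ, where all B(w_i) are pairwise disjoint blue cliques. Then Γ contains a blue copy of P_{2kn}^k, and in particular a blue copy of P_n^k. -/

import Mathlib

/-!
Give every block `B(w_i)` an ordering of `2k` of its vertices whose first half lies in
`Y_i` and whose second half lies in `X_i` (only one of the two constraints applies at the
ends of the chain), and concatenate these orderings. Two vertices at distance at most `k` in
the resulting sequence lie either in one block, hence are joined inside a blue clique, or in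
consecutive blocks `i`, `i + 1`; then the earlier one is in the second half of block `i` and
the later one in the first half of block `i + 1`, so they are joined by the blue `K_{2k,2k}`.
-/

/-- The `k`-th power of a graph. -/
def powGraph {V : Type*} (G : SimpleGraph V) (k : ℕ) : SimpleGraph V where
  Adj u v := u ≠ v ∧ ∃ w : G.Walk u v, w.length ≤ k
  symm := by
    constructor
    rintro u v ⟨h, w, hw⟩
    exact ⟨h.symm, w.reverse, by simpa using hw⟩
  loopless := by constructor; rintro u ⟨h, -⟩; exact h rfl

open Finset SimpleGraph

section

variable {V : Type*}

lemma pathGraph_val_le_add_walk_length {m : ℕ} {a b : Fin m} (w : (pathGraph m).Walk a b) :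
    (b : ℕ) ≤ a + w.length ∧ (a : ℕ) ≤ b + w.length := by
  induction w with
  | nil => simp
  | cons h _ ih =>
    rw [pathGraph_adj] at h
    simp only [Walk.length_cons]
    omega

lemma pathGraph_exists_walk_length_eq {m : ℕ} (d : ℕ) :
    ∀ a b : Fin m, (b : ℕ) = a + d → ∃ w : (pathGraph m).Walk a b, w.length = d := by
  induction d with
  | zero =>
    intro a b h
    obtain rfl : a = b := Fin.ext (by omega)
    exact ⟨.nil, rfl⟩
  | succ d ih =>
    intro a b h
    have hsucc : (a : ℕ) + 1 < m := by omega
    have hadj : (pathGraph m).Adj a ⟨a + 1, hsucc⟩ := pathGraph_adj.mpr (Or.inl rfl)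
    obtain ⟨w, hw⟩ := ih ⟨a + 1, hsucc⟩ b (by simp only; omega)
    exact ⟨.cons hadj w, by simp [hw]⟩

lemma powGraph_pathGraph_adj {m k : ℕ} {a b : Fin m} :
    (powGraph (pathGraph m) k).Adj a b ↔ a ≠ b ∧ (b : ℕ) ≤ a + k ∧ (a : ℕ) ≤ b + k := by
  constructor
  · rintro ⟨hne, w, hw⟩
    have := pathGraph_val_le_add_walk_length w
    exact ⟨hne, by omega, by omega⟩
  · rintro ⟨hne, hba, hab⟩
    refine ⟨hne, ?_⟩
    rcases le_total (a : ℕ) b with h | h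
    · obtain ⟨w, hw⟩ := pathGraph_exists_walk_length_eq (b - a) a b (by omega)
      exact ⟨w, by omega⟩
    · obtain ⟨w, hw⟩ := pathGraph_exists_walk_length_eq (a - b) b a (by omega)
      exact ⟨w.reverse, by rw [Walk.length_reverse]; omega⟩

lemma exists_injective_hom_powGraph_pathGraph {G : SimpleGraph V} {m m' k : ℕ} (hm : m' ≤ m)
    {F : Fin m → V} (hF : Function.Injective F)
    (hadj : ∀ a b : Fin m, a < b → (b : ℕ) ≤ a + k → G.Adj (F a) (F b)) :
    ∃ f : powGraph (pathGraph m') k →g G, Function.Injective f := by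
  refine ⟨⟨F ∘ Fin.castLE hm, fun {a b} h => ?_⟩, hF.comp (Fin.castLE_injective hm)⟩
  obtain ⟨hne, hba, hab⟩ := powGraph_pathGraph_adj.mp h
  rcases lt_or_gt_of_ne hne with h | h
  · exact hadj _ _ h hba
  · exact (hadj _ _ h hab).symm

lemma exists_injective_fin_add_of_card_le [DecidableEq V] {P Q : Finset V} {a b : ℕ}
    (hP : a + b ≤ #P) (hQ : b ≤ #Q) :
    ∃ g : Fin (a + b) → V, Function.Injective g ∧
      (∀ j : Fin (a + b), (j : ℕ) < a → g j ∈ P) ∧ ∀ j : Fin (a + b), a ≤ (j : ℕ) → g j ∈ Q := by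
  obtain ⟨C, hCQ, hC⟩ := exists_subset_card_eq hQ
  obtain ⟨A, hAP, hA⟩ := exists_subset_card_eq
    (show a ≤ #(P \ C) by have := le_card_sdiff C P; omega)
  let eA : Fin a → V := fun j => ((equivFinOfCardEq hA).symm j : V)
  let eC : Fin b → V := fun j => ((equivFinOfCardEq hC).symm j : V)
  have hmemA (j : Fin a) : eA j ∈ P \ C := hAP ((equivFinOfCardEq hA).symm j).2
  have hmemC (j : Fin b) : eC j ∈ C := ((equivFinOfCardEq hC).symm j).2
  refine ⟨Fin.append eA eC, Fin.append_injective_iff.mpr ⟨?_, ?_, ?_⟩, ?_, ?_⟩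
  · exact Subtype.val_injective.comp (equivFinOfCardEq hA).symm.injective
  · exact Subtype.val_injective.comp (equivFinOfCardEq hC).symm.injective
  · exact fun i j h => (mem_sdiff.mp (hmemA i)).2 (h ▸ hmemC j)
  · refine Fin.addCases (fun j _ => ?_) (fun j h => ?_)
    · simpa using (mem_sdiff.mp (hmemA j)).1
    · simp at h
  · refine Fin.addCases (fun j h => ?_) (fun j _ => ?_)
    · simp only [Fin.val_castAdd] at h
      omega
    · simpa using hCQ (hmemC j)

lemma exists_blockwise_enumeration {n k : ℕ} (hn : 2 ≤ n) {B X Y : Fin n → Finset V}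
    (hdisj : ∀ i j, i ≠ j → Disjoint (B i) (B j))
    (hX : ∀ i : Fin n, (i : ℕ) + 1 < n → X i ⊆ B i ∧ #(X i) = k + k)
    (hY : ∀ i : Fin n, 0 < (i : ℕ) → Y i ⊆ B i ∧ #(Y i) = k + k) :
    ∃ g : Fin n × Fin (k + k) → V, Function.Injective g ∧ (∀ p, g p ∈ B p.1) ∧
      (∀ (i : Fin n) (j : Fin (k + k)), 0 < (i : ℕ) → (j : ℕ) < k → g (i, j) ∈ Y i) ∧
      ∀ (i : Fin n) (j : Fin (k + k)), (i : ℕ) + 1 < n → k ≤ (j : ℕ) → g (i, j) ∈ X i := by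
  classical
  have hsides : ∀ i : Fin n, ∃ P Q : Finset V, P ⊆ B i ∧ Q ⊆ B i ∧ #P = k + k ∧ #Q = k + k ∧
      (0 < (i : ℕ) → P = Y i) ∧ ((i : ℕ) + 1 < n → Q = X i) := by
    intro i
    by_cases h0 : 0 < (i : ℕ) <;> by_cases h1 : (i : ℕ) + 1 < n
    · exact ⟨Y i, X i, (hY i h0).1, (hX i h1).1, (hY i h0).2, (hX i h1).2,
        fun _ => rfl, fun _ => rfl⟩
    · exact ⟨Y i, Y i, (hY i h0).1, (hY i h0).1, (hY i h0).2, (hY i h0).2,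
        fun _ => rfl, (absurd · h1)⟩
    · exact ⟨X i, X i, (hX i h1).1, (hX i h1).1, (hX i h1).2, (hX i h1).2,
        (absurd · h0), fun _ => rfl⟩
    · omega
  choose P Q hPB hQB hP hQ hPY hQX using hsides
  choose g hg hgP hgQ using fun i =>
    exists_injective_fin_add_of_card_le (hP i).ge (show k ≤ #(Q i) by have := hQ i; omega)
  have hgB (p : Fin n × Fin (k + k)) : g p.1 p.2 ∈ B p.1 := by
    rcases lt_or_ge (p.2 : ℕ) k with h | h
    · exact hPB _ (hgP _ _ h)
    · exact hQB _ (hgQ _ _ h)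
  refine ⟨fun p => g p.1 p.2, ?_, hgB, fun i j h0 h => hPY i h0 ▸ hgP i j h,
    fun i j h1 h => hQX i h1 ▸ hgQ i j h⟩
  rintro ⟨i, j⟩ ⟨i', j'⟩ (h : g i j = g i' j')
  obtain rfl : i = i' := by
    by_contra hii'
    exact disjoint_left.mp (hdisj i i' hii') (hgB (i, j)) (h ▸ hgB (i', j'))
  rw [hg i h]

lemma adj_comp_finProdFinEquiv_symm {G : SimpleGraph V} {n q k : ℕ} (hkq : k ≤ q)
    (g : Fin n × Fin q → V) (hsame : ∀ i j j', j ≠ j' → G.Adj (g (i, j)) (g (i, j')))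
    (hnext : ∀ i i' : Fin n, (i' : ℕ) = i + 1 →
      ∀ j j' : Fin q, q + j' ≤ j + k → G.Adj (g (i, j)) (g (i', j')))
    (a b : Fin (n * q)) (hab : a < b) (hba : (b : ℕ) ≤ a + k) :
    G.Adj ((g ∘ finProdFinEquiv.symm) a) ((g ∘ finProdFinEquiv.symm) b) := by
  obtain ⟨⟨i, j⟩, rfl⟩ := finProdFinEquiv.surjective a
  obtain ⟨⟨i', j'⟩, rfl⟩ := finProdFinEquiv.surjective b
  rw [Fin.lt_def] at hab
  simp only [Function.comp_apply, Equiv.symm_apply_apply, finProdFinEquiv_apply_val] at *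
  have hj := j.2
  have hj' := j'.2
  rcases lt_trichotomy (i : ℕ) i' with h | h | h
  · obtain h | h := Nat.lt_or_ge (i' : ℕ) (i + 2)
    · exact hnext i i' (by omega) j j' (by nlinarith)
    · nlinarith
  · obtain rfl : i = i' := Fin.ext h
    exact hsame i j j' (fun hjj' => by subst hjj'; omega)
  · nlinarith

end

/-- Pairwise disjoint blue cliques `B(w_1), …, B(w_n)` joined by blue
complete bipartite graphs `K_{2k,2k}` (with sides `X_i ⊆ B(w_i)`, `Y_{i+1} ⊆ B(w_{i+1})`)
yield a blue copy of `P_{2kn}^k`, and in particular a blue copy of `P_n^k`. -/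
theorem stmt5 {V : Type*} (Blue : SimpleGraph V)
    (n k : ℕ) (hn : 2 ≤ n) (hk : 1 ≤ k)
    (B : Fin n → Finset V)
    (hdisj : ∀ i j, i ≠ j → Disjoint (B i) (B j))
    (hclique : ∀ i, ∀ u ∈ B i, ∀ v ∈ B i, u ≠ v → Blue.Adj u v)
    (X Y : Fin n → Finset V)
    (hXY : ∀ (i : ℕ) (h : i + 1 < n),
      X ⟨i, by omega⟩ ⊆ B ⟨i, by omega⟩ ∧ Y ⟨i + 1, h⟩ ⊆ B ⟨i + 1, h⟩ ∧
      Disjoint (X ⟨i, by omega⟩) (Y ⟨i + 1, h⟩) ∧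
      (X ⟨i, by omega⟩).card = 2 * k ∧ (Y ⟨i + 1, h⟩).card = 2 * k ∧
      ∀ u ∈ X ⟨i, by omega⟩, ∀ v ∈ Y ⟨i + 1, h⟩, Blue.Adj u v) :
    (∃ f : powGraph (SimpleGraph.pathGraph (2 * k * n)) k →g Blue,
        Function.Injective f) ∧
    (∃ f : powGraph (SimpleGraph.pathGraph n) k →g Blue, Function.Injective f) := by
  have hX (i : Fin n) (hi : (i : ℕ) + 1 < n) : X i ⊆ B i ∧ #(X i) = k + k :=
    ⟨(hXY i hi).1, by rw [(hXY i hi).2.2.2.1, two_mul]⟩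
  have hY : ∀ i : Fin n, 0 < (i : ℕ) → Y i ⊆ B i ∧ #(Y i) = k + k := by
    rintro ⟨_ | i, hi⟩ h0
    · exact absurd h0 (lt_irrefl 0)
    · exact ⟨(hXY i hi).2.1, by rw [(hXY i hi).2.2.2.2.1, two_mul]⟩
  have hjoin : ∀ i i' : Fin n, (i' : ℕ) = i + 1 → ∀ u ∈ X i, ∀ v ∈ Y i', Blue.Adj u v := by
    rintro ⟨i, -⟩ ⟨_, hi'⟩ rfl
    exact (hXY i hi').2.2.2.2.2
  obtain ⟨g, hg, hgB, hgY, hgX⟩ := exists_blockwise_enumeration hn hdisj hX hY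
  have hpath := adj_comp_finProdFinEquiv_symm le_add_self g
    (fun i j j' hjj' => hclique i _ (hgB _) _ (hgB _) (hg.ne (by simpa using hjj')))
    (fun i i' hi' j j' hjj' => hjoin i i' hi' _ (hgX i j (by omega) (by omega)) _
      (hgY i' j' (by omega) (by omega)))
  have hinj := hg.comp finProdFinEquiv.symm.injective
  exact ⟨exists_injective_hom_powGraph_pathGraph (by rw [two_mul, mul_comm]) hinj hpath,
    exists_injective_hom_powGraph_pathGraph (Nat.le_mul_of_pos_right n (by omega)) hinj hpath⟩
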